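/- arXiv:1410.8071 — 2 statements merged into one kernel-verified Lean document; each statement's English description precedes it below -/
import Mathlib

section
/- For any permitted partition P of the columns, the stand of T0 relative to the maximal partition P_max is at least as large as the stand of T0 relative to P: |S(C,P_max,T0)| ≥ |S(C,P,T0)|. -/
/-- Restriction of a tree (given by its set of clusters) to a leaf subset `L`. -/
def restrictT {V : Type*} (T : Set (Set V)) (L : Set V) : Set (Set V) :=
  {c | ∃ d ∈ T, c = d ∩ L ∧ c ≠ ∅}

/-- A rooted binary phylogenetic tree on label set `V`, modeled by its set of clusters:
a laminar family containing all singletons and `univ`, not containing `∅`, in which every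
non-singleton cluster is the disjoint union of two proper sub-clusters of the family. -/
def IsBinaryPhylo {V : Type*} (T : Set (Set V)) : Prop :=
  (∀ x : V, {x} ∈ T) ∧ Set.univ ∈ T ∧ ∅ ∉ T ∧
    (∀ a ∈ T, ∀ b ∈ T, a ⊆ b ∨ b ⊆ a ∨ a ∩ b = ∅) ∧
    (∀ c ∈ T, (¬ ∃ x, c = {x}) →
      ∃ a ∈ T, ∃ b ∈ T, a ∩ b = ∅ ∧ a ∪ b = c ∧ a ≠ c ∧ b ≠ c)

/-- `P` is a partition of the set of columns (type `Col`). -/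
def IsPartitionOf {Col : Type*} (P : Set (Set Col)) : Prop :=
  ∅ ∉ P ∧ ⋃₀ P = Set.univ ∧ ∀ B ∈ P, ∀ B' ∈ P, B ≠ B' → B ∩ B' = ∅

/-- The label set of a block `B` of columns: all taxa having data in some column of `B`,
where `L j` is the label set (taxa coverage) of column `j`. -/
def blockLabel {Col V : Type*} (L : Col → Set V) (B : Set Col) : Set V :=
  ⋃ j ∈ B, L j

/-- The stand `S(C,P,T₀)`: all binary phylogenetic trees on the full label set that agree
with `T₀` when restricted to the label set of every block of the partition `P`. -/
def stand {Col V : Type*} (L : Col → Set V) (P : Set (Set Col)) (T0 : Set (Set V)) :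
    Set (Set (Set V)) :=
  {T | IsBinaryPhylo T ∧ ∀ B ∈ P, restrictT T (blockLabel L B) = restrictT T0 (blockLabel L B)}

/-- `P'` refines `P`: every block of `P'` is a subset of some block of `P`. -/
def Refines {Col : Type*} (P' P : Set (Set Col)) : Prop :=
  ∀ B' ∈ P', ∃ B ∈ P, B' ⊆ B

/-- A partition is permitted if distinct blocks have distinct label sets. -/
def Permitted {Col V : Type*} (L : Col → Set V) (P : Set (Set Col)) : Prop :=
  ∀ B ∈ P, ∀ B' ∈ P, blockLabel L B = blockLabel L B' → B = B'

/-- The maximal partition `P_max`: columns grouped by identical label sets. -/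
def Pmax {Col V : Type*} (L : Col → Set V) : Set (Set Col) :=
  {B | ∃ j : Col, B = {j' | L j' = L j}}


lemma restrict_subset {V : Type*} (T : Set (Set V)) {A A' : Set V} (h : A' ⊆ A) :
    restrictT T A' = restrictT (restrictT T A) A' := by
  ext c
  constructor
  · rintro ⟨d, hd, rfl, hne⟩
    refine ⟨d ∩ A, ⟨d, hd, rfl, ?_⟩, ?_, hne⟩
    · intro he
      apply hne
      rw [Set.eq_empty_iff_forall_notMem] at he ⊢
      exact fun x hx => he x ⟨hx.1, h hx.2⟩
    · rw [Set.inter_assoc, Set.inter_eq_right.mpr h]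
  · rintro ⟨e, ⟨d, hd, rfl, hne'⟩, rfl, hne⟩
    refine ⟨d, hd, ?_, hne⟩
    rw [Set.inter_assoc, Set.inter_eq_right.mpr h]

/-- For any permitted partition `P`, the stand of `T₀` relative to the maximal
partition `P_max` is at least as large as the stand of `T₀` relative to `P`. -/
theorem ncard_stand_Pmax_ge {Col V : Type*} [Fintype V] (L : Col → Set V)
    (P : Set (Set Col)) (hP : IsPartitionOf P) (hperm : Permitted L P)
    (T0 : Set (Set V)) (hT0 : IsBinaryPhylo T0) :
    (stand L P T0).ncard ≤ (stand L (Pmax L) T0).ncard := by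
  apply Set.ncard_le_ncard _ (Set.toFinite _)
  rintro T ⟨hT, hagree⟩
  refine ⟨hT, ?_⟩
  rintro B ⟨j, rfl⟩
  -- label of this Pmax block is L j
  have hlab : blockLabel L {j' | L j' = L j} = L j := by
    apply subset_antisymm
    · intro x hx
      simp only [blockLabel, Set.mem_iUnion] at hx
      obtain ⟨j', hj', hx⟩ := hx
      rwa [← hj']
    · intro x hx
      simp only [blockLabel, Set.mem_iUnion]
      exact ⟨j, rfl, hx⟩
  rw [hlab]
  -- find block of P containing j
  have hj : j ∈ ⋃₀ P := by rw [hP.2.1]; trivial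
  obtain ⟨B0, hB0, hjB0⟩ := hj
  have hsub : L j ⊆ blockLabel L B0 := by
    intro x hx
    simp only [blockLabel, Set.mem_iUnion]
    exact ⟨j, hjB0, hx⟩
  rw [restrict_subset T hsub, restrict_subset T0 hsub, hagree B0 hB0]
end

section
/- As n_A, n_B → ∞ (with min(n_A,n_B) ≤ 3 maintained or using the average formula), the fraction of trees on the terrace that display the bipartition XA|BY, namely 2 / (2 + R(n_A+n_B)/(R(n_A)R(n_B))), tends to 0; equivalently the fraction with the incorrect bipartition AB|XY tends to 1. -/
open Filter

/-- `R k = (2k−3)!!`, the number of rooted binary phylogenetic trees on `k` leaves. -/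
def Rtrees (k : ℕ) : ℕ := Nat.doubleFactorial (2 * k - 3)

/-!
Since `R (k + 1) = (2k − 1) R k`, induction on `n_B` gives
`R (n_A + n_B) ≥ (2(n_A + n_B) − 3) R n_A R n_B` once `n_A, n_B ≥ 1`. So the ratio
`ρ = R (n_A + n_B) / (R n_A R n_B)` tends to infinity, whence `2 / (2 + ρ) → 0` and
`ρ / (2 + ρ) = 1 − 2 / (2 + ρ) → 1`.
-/

lemma Rtrees_pos (k : ℕ) : 0 < Rtrees k := Nat.doubleFactorial_pos _

lemma Rtrees_one : Rtrees 1 = 1 := rfl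

lemma Rtrees_succ {k : ℕ} (hk : 1 ≤ k) : Rtrees (k + 1) = (2 * k - 1) * Rtrees k := by
  obtain _ | _ | m := k
  · omega
  · rfl
  · have h₁ : 2 * (m + 2 + 1) - 3 = 2 * m + 1 + 2 := by omega
    have h₂ : 2 * (m + 2) - 3 = 2 * m + 1 := by omega
    have h₃ : 2 * (m + 2) - 1 = 2 * m + 1 + 2 := by omega
    rw [Rtrees, Rtrees, h₁, h₂, h₃, Nat.doubleFactorial_add_two]

lemma mul_Rtrees_mul_le_Rtrees_add {a b : ℕ} (ha : 1 ≤ a) (hb : 1 ≤ b) :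
    (2 * (a + b) - 3) * (Rtrees a * Rtrees b) ≤ Rtrees (a + b) := by
  induction b, hb using Nat.le_induction with
  | base => simp [Rtrees_one, Rtrees_succ ha, show 2 * (a + 1) - 3 = 2 * a - 1 by omega]
  | succ b hb ih =>
    rw [← add_assoc, Rtrees_succ (by omega : 1 ≤ a + b), Rtrees_succ hb,
      show 2 * (a + b + 1) - 3 = 2 * (a + b) - 1 by omega]
    calc (2 * (a + b) - 1) * (Rtrees a * ((2 * b - 1) * Rtrees b))
        = (2 * (a + b) - 1) * ((2 * b - 1) * (Rtrees a * Rtrees b)) := by ring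
      _ ≤ (2 * (a + b) - 1) * ((2 * (a + b) - 3) * (Rtrees a * Rtrees b)) := by
        gcongr (2 * (a + b) - 1) * (?_ * _); omega
      _ ≤ (2 * (a + b) - 1) * Rtrees (a + b) := by gcongr

/-- The terrace has `2 + terraceRatio n_A n_B` trees. -/
noncomputable def terraceRatio (a b : ℕ) : ℝ :=
  (Rtrees (a + b) : ℝ) / ((Rtrees a : ℝ) * (Rtrees b : ℝ))

lemma two_mul_add_sub_three_le_terraceRatio {a b : ℕ} (ha : 1 ≤ a) (hb : 1 ≤ b) :
    2 * ((a : ℝ) + b) - 3 ≤ terraceRatio a b := by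
  have hpos : (0 : ℝ) < Rtrees a * Rtrees b := by
    have := Rtrees_pos a; have := Rtrees_pos b; positivity
  rw [terraceRatio, le_div_iff₀ hpos]
  have key : (((2 * (a + b) - 3 : ℕ) : ℝ)) * (Rtrees a * Rtrees b) ≤ Rtrees (a + b) := by
    exact_mod_cast mul_Rtrees_mul_le_Rtrees_add ha hb
  push_cast [Nat.cast_sub (by omega : 3 ≤ 2 * (a + b))] at key
  exact key

lemma tendsto_terraceRatio_atTop :
    Tendsto (fun p : ℕ × ℕ => terraceRatio p.1 p.2) (atTop ×ˢ atTop) atTop := by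
  have hfst : Tendsto (fun p : ℕ × ℕ => (p.1 : ℝ)) (atTop ×ˢ atTop) atTop :=
    tendsto_natCast_atTop_atTop.comp tendsto_fst
  refine tendsto_atTop_mono' _ ?_ hfst
  filter_upwards [(eventually_ge_atTop 1).prod_mk (eventually_ge_atTop 1)] with p ⟨ha, hb⟩
  have ha' : (1 : ℝ) ≤ p.1 := by exact_mod_cast ha
  have hb' : (1 : ℝ) ≤ p.2 := by exact_mod_cast hb
  linarith [two_mul_add_sub_three_le_terraceRatio ha hb]

section

variable {α : Type*} {l : Filter α} {f : α → ℝ}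

lemma Filter.Tendsto.const_div_const_add_atTop (c : ℝ) (hf : Tendsto f l atTop) :
    Tendsto (fun x => c / (c + f x)) l (nhds 0) :=
  tendsto_const_nhds.div_atTop (tendsto_atTop_add_const_left _ c hf)

lemma Filter.Tendsto.div_const_add_atTop (c : ℝ) (hf : Tendsto f l atTop) :
    Tendsto (fun x => f x / (c + f x)) l (nhds 1) := by
  have hsub : Tendsto (fun x => 1 - c / (c + f x)) l (nhds 1) := by
    simpa using tendsto_const_nhds.sub (hf.const_div_const_add_atTop c)
  refine hsub.congr' ?_
  filter_upwards [hf.eventually_gt_atTop (-c)] with x hx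
  have hne : c + f x ≠ 0 := by linarith
  field_simp
  ring

end

/-- as `n_A, n_B → ∞`, the fraction `2/(2 + R(n_A+n_B)/(R(n_A)R(n_B)))` of
terrace trees displaying the bipartition `XA|BY` tends to 0; equivalently the fraction
with the incorrect bipartition `AB|XY` tends to 1. -/
theorem terrace_fraction_tendsto :
    Tendsto
      (fun p : ℕ × ℕ =>
        (2 : ℝ) / (2 + (Rtrees (p.1 + p.2) : ℝ) / ((Rtrees p.1 : ℝ) * (Rtrees p.2 : ℝ))))
      (atTop ×ˢ atTop) (nhds 0) ∧
    Tendsto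
      (fun p : ℕ × ℕ =>
        ((Rtrees (p.1 + p.2) : ℝ) / ((Rtrees p.1 : ℝ) * (Rtrees p.2 : ℝ))) /
          (2 + (Rtrees (p.1 + p.2) : ℝ) / ((Rtrees p.1 : ℝ) * (Rtrees p.2 : ℝ))))
      (atTop ×ˢ atTop) (nhds 1) :=
  ⟨tendsto_terraceRatio_atTop.const_div_const_add_atTop 2,
    tendsto_terraceRatio_atTop.div_const_add_atTop 2⟩
end
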